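/- Let K₁ and K₂ be fractal segments of order n with digit sets D₁ and D₂. For a ∈ {−1,0,1} set F_a = K₁ ∩ (K₂ + a) and G_a = D₁ ∩ (D₂ − a). If G₀ = {d₀} is a singleton and (F₁ + G₁) ∪ (F_{−1} + G_{−1}) = ∅, then F₀ = K₁ ∩ K₂ is the singleton {d₀/(n−1)}. -/

import Mathlib

/-! Each `x ∈ K₁ ∩ K₂` is `(y₁ + d₁)/n = (y₂ + d₂)/n` with `y₁ ∈ K₁`, `y₂ ∈ K₂`, `dᵢ ∈ Dᵢ`.
Since `K₁, K₂ ⊆ [0,1]`, `a := d₂ - d₁ = y₁ - y₂` lies in `{-1, 0, 1}`, and then `y₁ ∈ F_a`,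
`d₁ ∈ G_a`. The emptiness hypothesis leaves only `a = 0`, where `G₀ = {d₀}`: so `K₁ ∩ K₂` lies in
its own image under the contraction `x ↦ (x + d₀)/n` and has diameter zero. It contains the fixed
point `d₀/(n-1)` of that contraction, which lies in `K₁` and `K₂` since both are closed and mapped
into themselves by it. -/

open Set Pointwise

noncomputable section

/-- `K` is a fractal segment of order `n` with (nonempty) digit set `D ⊆ {0,…,n-1}`:
a nonempty compact set with `K = (K + D)/n`. -/
def IsFractalSegment (n : ℕ) (D : Set ℤ) (K : Set ℝ) : Prop :=
  2 ≤ n ∧ D.Nonempty ∧ D ⊆ Set.Icc 0 ((n : ℤ) - 1) ∧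
  K.Nonempty ∧ IsCompact K ∧
  K = ⋃ d ∈ D, (fun x => (x + (d : ℝ)) / n) '' K

/-- `F_a = K₁ ∩ (K₂ + a)`. -/
def segF (K₁ K₂ : Set ℝ) (a : ℤ) : Set ℝ := K₁ ∩ ((· + (a : ℝ)) '' K₂)

/-- `G_a = D₁ ∩ (D₂ - a)`. -/
def segG (D₁ D₂ : Set ℤ) (a : ℤ) : Set ℤ := D₁ ∩ ((· - a) '' D₂)

open scoped NNReal

theorem ContractingWith.fixedPoint_mem_of_mapsTo {X : Type*} [MetricSpace X] [Nonempty X]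
    [CompleteSpace X] {K : ℝ≥0} {f : X → X} (hf : ContractingWith K f) {s : Set X}
    (hs : IsClosed s) (hne : s.Nonempty) (hmaps : MapsTo f s s) : fixedPoint f hf ∈ s := by
  obtain ⟨x, hx⟩ := hne
  exact hs.mem_of_tendsto (hf.tendsto_iterate_fixedPoint x)
    (Filter.Eventually.of_forall fun k => hmaps.iterate k hx)

theorem ContractingWith.subsingleton_of_subset_image {X : Type*} [MetricSpace X] {K : ℝ≥0}
    {f : X → X} (hf : ContractingWith K f) {s : Set X} (hs : Bornology.IsBounded s)
    (hsub : s ⊆ f '' s) : s.Subsingleton := by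
  have hle : Metric.diam s ≤ K * Metric.diam s :=
    (Metric.diam_mono hsub (hf.toLipschitzWith.isBounded_image hs)).trans
      (hf.toLipschitzWith.diam_image_le s hs)
  have hK : (K : ℝ) < 1 := hf.1
  have h0 : Metric.diam s = 0 := by nlinarith [Metric.diam_nonneg (s := s)]
  rw [← Metric.ediam_eq_zero_iff]
  exact ((ENNReal.toReal_eq_zero_iff _).1 h0).resolve_right hs.ediam_ne_top

def digitMap (n : ℕ) (d : ℤ) (x : ℝ) : ℝ := (x + d) / n

theorem contractingWith_digitMap {n : ℕ} (hn : 2 ≤ n) (d : ℤ) :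
    ContractingWith (n : ℝ≥0)⁻¹ (digitMap n d) := by
  refine ⟨inv_lt_one_of_one_lt₀ (by exact_mod_cast hn), LipschitzWith.of_dist_le_mul fun x y => ?_⟩
  simp only [Real.dist_eq, digitMap, NNReal.coe_inv, NNReal.coe_natCast]
  rw [div_sub_div_same, add_sub_add_right_eq_sub, abs_div, Nat.abs_cast, inv_mul_eq_div]

theorem isFixedPt_digitMap {n : ℕ} (hn : 2 ≤ n) (d : ℤ) :
    Function.IsFixedPt (digitMap n d) (d / (n - 1)) := by
  have hn' : (n : ℝ) - 1 ≠ 0 := by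
    have : (2 : ℝ) ≤ n := by exact_mod_cast hn
    linarith
  have : (n : ℝ) ≠ 0 := by positivity
  simp only [Function.IsFixedPt, digitMap]
  field_simp
  ring

namespace IsFractalSegment

variable {n : ℕ} {D : Set ℤ} {K : Set ℝ}

theorem two_le (h : IsFractalSegment n D K) : 2 ≤ n := h.1

theorem digits_subset (h : IsFractalSegment n D K) : D ⊆ Icc 0 ((n : ℤ) - 1) := h.2.2.1

theorem nonempty (h : IsFractalSegment n D K) : K.Nonempty := h.2.2.2.1

theorem isCompact (h : IsFractalSegment n D K) : IsCompact K := h.2.2.2.2.1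

theorem eq_iUnion_image_digitMap (h : IsFractalSegment n D K) :
    K = ⋃ d ∈ D, digitMap n d '' K :=
  h.2.2.2.2.2

theorem mapsTo_digitMap (h : IsFractalSegment n D K) {d : ℤ} (hd : d ∈ D) :
    MapsTo (digitMap n d) K K := fun x hx => by
  rw [h.eq_iUnion_image_digitMap]
  exact mem_biUnion hd (mem_image_of_mem _ hx)

theorem exists_digitMap_eq (h : IsFractalSegment n D K) {x : ℝ} (hx : x ∈ K) :
    ∃ d ∈ D, ∃ y ∈ K, digitMap n d y = x := by
  rw [h.eq_iUnion_image_digitMap] at hx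
  simpa only [mem_iUnion, mem_image, exists_prop] using hx

theorem subset_Icc (h : IsFractalSegment n D K) : K ⊆ Icc 0 1 := by
  have hn : (2 : ℝ) ≤ n := by exact_mod_cast h.two_le
  have hdigit : ∀ x ∈ K, ∃ y ∈ K, ∃ d : ℝ, 0 ≤ d ∧ d ≤ n - 1 ∧ x * n = y + d := by
    intro x hx
    obtain ⟨d, hd, y, hy, rfl⟩ := h.exists_digitMap_eq hx
    obtain ⟨hd0, hd1⟩ := h.digits_subset hd
    refine ⟨y, hy, d, by exact_mod_cast hd0, by exact_mod_cast hd1, ?_⟩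
    simp only [digitMap]
    field_simp
  -- `sInf K` and `sSup K` lie in `K`, hence are digit-map images of points of `K`.
  have hK := h.isCompact
  obtain ⟨y, hy, d, hd, -, hinf⟩ := hdigit _ (hK.sInf_mem h.nonempty)
  obtain ⟨y', hy', d', -, hd', hsup⟩ := hdigit _ (hK.sSup_mem h.nonempty)
  have hy_ge := csInf_le hK.bddBelow hy
  have hy'_le := le_csSup hK.bddAbove hy'
  exact fun x hx => ⟨(by nlinarith : 0 ≤ sInf K).trans (csInf_le hK.bddBelow hx),
    (le_csSup hK.bddAbove hx).trans (by nlinarith)⟩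

theorem digit_div_mem (h : IsFractalSegment n D K) {d : ℤ} (hd : d ∈ D) :
    (d : ℝ) / (n - 1) ∈ K := by
  have hf := contractingWith_digitMap h.two_le d
  rw [hf.fixedPoint_unique (isFixedPt_digitMap h.two_le d)]
  exact hf.fixedPoint_mem_of_mapsTo h.isCompact.isClosed h.nonempty (h.mapsTo_digitMap hd)

end IsFractalSegment

theorem segF_zero (K₁ K₂ : Set ℝ) : segF K₁ K₂ 0 = K₁ ∩ K₂ := by
  simp [segF]

theorem segG_zero (D₁ D₂ : Set ℤ) : segG D₁ D₂ 0 = D₁ ∩ D₂ := by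
  simp [segG]

section

variable {n : ℕ} {D₁ D₂ : Set ℤ} {K₁ K₂ : Set ℝ}

theorem exists_mem_segF_mem_segG_of_mem_inter (h1 : IsFractalSegment n D₁ K₁)
    (h2 : IsFractalSegment n D₂ K₂) {x : ℝ} (hx : x ∈ K₁ ∩ K₂) :
    ∃ a : ℤ, |a| ≤ 1 ∧ ∃ y ∈ segF K₁ K₂ a, ∃ d ∈ segG D₁ D₂ a, digitMap n d y = x := by
  obtain ⟨d₁, hd₁, y₁, hy₁, rfl⟩ := h1.exists_digitMap_eq hx.1
  obtain ⟨d₂, hd₂, y₂, hy₂, hxy⟩ := h2.exists_digitMap_eq hx.2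
  have hn : (n : ℝ) ≠ 0 := by have := h1.two_le; positivity
  have hsum : y₂ + d₂ = y₁ + d₁ := by simpa only [digitMap, div_left_inj' hn] using hxy
  have hdiff : y₁ - y₂ = ((d₂ - d₁ : ℤ) : ℝ) := by push_cast; linarith
  have hy₁' := h1.subset_Icc hy₁
  have hy₂' := h2.subset_Icc hy₂
  refine ⟨d₂ - d₁, ?_, y₁, ⟨hy₁, y₂, hy₂, by linarith⟩, d₁, ⟨hd₁, d₂, hd₂, by ring⟩, rfl⟩
  have : |y₁ - y₂| ≤ 1 :=
    abs_sub_le_iff.2 ⟨by linarith [hy₁'.2, hy₂'.1], by linarith [hy₁'.1, hy₂'.2]⟩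
  exact_mod_cast hdiff ▸ this

theorem inter_subset_image_digitMap (h1 : IsFractalSegment n D₁ K₁)
    (h2 : IsFractalSegment n D₂ K₂) {d₀ : ℤ} (hG0 : segG D₁ D₂ 0 = {d₀})
    (hempty : (segF K₁ K₂ 1 + (fun g : ℤ => (g : ℝ)) '' segG D₁ D₂ 1) ∪
      (segF K₁ K₂ (-1) + (fun g : ℤ => (g : ℝ)) '' segG D₁ D₂ (-1)) = ∅) :
    K₁ ∩ K₂ ⊆ digitMap n d₀ '' (K₁ ∩ K₂) := by
  intro x hx
  obtain ⟨a, ha, y, hy, d, hd, rfl⟩ := exists_mem_segF_mem_segG_of_mem_inter h1 h2 hx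
  have hsum : y + d ∈ segF K₁ K₂ a + (fun g : ℤ => (g : ℝ)) '' segG D₁ D₂ a :=
    add_mem_add hy (mem_image_of_mem _ hd)
  obtain rfl | rfl | rfl : a = -1 ∨ a = 0 ∨ a = 1 := by
    obtain ⟨hlo, hhi⟩ := abs_le.1 ha; omega
  · exact absurd (hempty ▸ mem_union_right _ hsum) (notMem_empty _)
  · rw [segF_zero] at hy
    rw [hG0, mem_singleton_iff] at hd
    exact hd ▸ mem_image_of_mem _ hy
  · exact absurd (hempty ▸ mem_union_left _ hsum) (notMem_empty _)

end

/-- If `G₀ = {d₀}` and `(F₁ + G₁) ∪ (F₋₁ + G₋₁) = ∅`, then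
`F₀ = K₁ ∩ K₂` is the singleton `{d₀/(n-1)}`. -/
theorem fractalSegment_singleton_intersection
    (n : ℕ) (D₁ D₂ : Set ℤ) (K₁ K₂ : Set ℝ)
    (h1 : IsFractalSegment n D₁ K₁) (h2 : IsFractalSegment n D₂ K₂)
    (d₀ : ℤ) (hG0 : segG D₁ D₂ 0 = {d₀})
    (hempty : (segF K₁ K₂ 1 + (fun g : ℤ => (g : ℝ)) '' segG D₁ D₂ 1) ∪
      (segF K₁ K₂ (-1) + (fun g : ℤ => (g : ℝ)) '' segG D₁ D₂ (-1)) = ∅) :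
    K₁ ∩ K₂ = {(d₀ : ℝ) / ((n : ℝ) - 1)} := by
  obtain ⟨hd₁, hd₂⟩ : d₀ ∈ D₁ ∩ D₂ := by rw [← segG_zero, hG0]; rfl
  have hbdd : Bornology.IsBounded (K₁ ∩ K₂) := h1.isCompact.isBounded.subset inter_subset_left
  exact ((contractingWith_digitMap h1.two_le d₀).subsingleton_of_subset_image hbdd
    (inter_subset_image_digitMap h1 h2 hG0 hempty)).eq_singleton_of_mem
    ⟨h1.digit_div_mem hd₁, h2.digit_div_mem hd₂⟩
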